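/- arXiv:2007.11368 — 2 statements merged into one kernel-verified Lean document; each statement's English description precedes it below -/
import Mathlib

section
/- If A and B are invertible and δ_{A,B}^m(I) = 0, then δ_{A^{-1},B^{-1}}^m(I) = 0. -/
/-!
Write `L_a` and `R_b` for left multiplication by `a` and right multiplication by `b`. These commute,
so the binomial theorem gives `δ_{A,B}^m(I) = (L_A - R_B)^m I`. For invertible `A`, `B` one has
`L_{A⁻¹} - R_{B⁻¹} = -L_{A⁻¹} R_{B⁻¹} (L_A - R_B)`, where the two factors commute; hence
`(L_{A⁻¹} - R_{B⁻¹})^m I = (-L_{A⁻¹} R_{B⁻¹})^m (L_A - R_B)^m I`, which vanishes with `δ_{A,B}^m(I)`.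
-/

open Finset

/-- Δ_{A,B}^r(I) = ∑_{j=0}^r (-1)^j C(r,j) A^{r-j} B^{r-j} -/
noncomputable def elemDelta {X : Type*} [NormedAddCommGroup X] [NormedSpace ℂ X]
    (A B : X →L[ℂ] X) (r : ℕ) : X →L[ℂ] X :=
  ∑ j ∈ Finset.range (r + 1), ((-1 : ℂ) ^ j * (r.choose j : ℂ)) • (A ^ (r - j) * B ^ (r - j))

/-- δ_{A,B}^r(I) = ∑_{j=0}^r (-1)^j C(r,j) A^{r-j} B^{j} -/
noncomputable def elemdelta {X : Type*} [NormedAddCommGroup X] [NormedSpace ℂ X]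
    (A B : X →L[ℂ] X) (r : ℕ) : X →L[ℂ] X :=
  ∑ j ∈ Finset.range (r + 1), ((-1 : ℂ) ^ j * (r.choose j : ℂ)) • (A ^ (r - j) * B ^ j)

variable {X : Type*} [NormedAddCommGroup X] [NormedSpace ℂ X]

open LinearMap

section MulLeftMulRight

variable {𝕜 R : Type*} [CommRing 𝕜] [Ring R] [Algebra 𝕜 R]

theorem pow_mulLeft_sub_mulRight_apply (a b x : R) (m : ℕ) :
    ((mulLeft 𝕜 a - mulRight 𝕜 b : Module.End 𝕜 R) ^ m) x =
      ∑ j ∈ range (m + 1), ((-1 : 𝕜) ^ j * m.choose j) • (a ^ (m - j) * x * b ^ j) := by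
  rw [← neg_add_eq_sub, ← neg_one_smul 𝕜 (mulRight 𝕜 b),
    ((commute_mulLeft_right (R := 𝕜) a b).smul_right _).symm.add_pow, LinearMap.sum_apply]
  refine sum_congr rfl fun j _ => ?_
  simp only [smul_pow, pow_mulLeft, pow_mulRight, smul_mul_assoc, Module.End.mul_apply,
    Module.End.natCast_apply, LinearMap.smul_apply, mulLeft_apply, mulRight_apply, mul_smul]
  rw [Nat.cast_smul_eq_nsmul, mul_smul_comm, smul_mul_assoc]

theorem mulLeft_inv_sub_mulRight_inv (u v : Rˣ) :
    (mulLeft 𝕜 (↑u⁻¹ : R) - mulRight 𝕜 (↑v⁻¹ : R) : Module.End 𝕜 R) =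
      -(mulLeft 𝕜 (↑u⁻¹ : R) * mulRight 𝕜 (↑v⁻¹ : R)) *
        (mulLeft 𝕜 (u : R) - mulRight 𝕜 (v : R)) := by
  ext x
  simp only [Module.End.mul_apply, LinearMap.neg_apply, LinearMap.sub_apply, mulLeft_apply,
    mulRight_apply]
  simp [mul_sub, sub_mul, mul_assoc]

theorem commute_mulLeft_inv_mul_mulRight_inv (u v : Rˣ) :
    Commute (mulLeft 𝕜 (↑u⁻¹ : R) * mulRight 𝕜 (↑v⁻¹ : R) : Module.End 𝕜 R)
      (mulLeft 𝕜 (u : R) - mulRight 𝕜 (v : R)) := by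
  ext x
  simp [mul_sub, sub_mul, mul_assoc]

theorem pow_mulLeft_inv_sub_mulRight_inv (u v : Rˣ) (m : ℕ) :
    (mulLeft 𝕜 (↑u⁻¹ : R) - mulRight 𝕜 (↑v⁻¹ : R) : Module.End 𝕜 R) ^ m =
      (-(mulLeft 𝕜 (↑u⁻¹ : R) * mulRight 𝕜 (↑v⁻¹ : R))) ^ m *
        (mulLeft 𝕜 (u : R) - mulRight 𝕜 (v : R)) ^ m := by
  rw [mulLeft_inv_sub_mulRight_inv,
    (commute_mulLeft_inv_mul_mulRight_inv (𝕜 := 𝕜) u v).neg_left.mul_pow]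

end MulLeftMulRight

theorem elemdelta_eq_pow_apply_one (A B : X →L[ℂ] X) (m : ℕ) :
    elemdelta A B m = ((mulLeft ℂ A - mulRight ℂ B : Module.End ℂ (X →L[ℂ] X)) ^ m) 1 := by
  simp only [elemdelta, pow_mulLeft_sub_mulRight_apply, mul_one]

theorem stmt5 (A B : (X →L[ℂ] X)ˣ) (m : ℕ)
    (h : elemdelta (A : X →L[ℂ] X) (B : X →L[ℂ] X) m = 0) :
    elemdelta ((A⁻¹ : (X →L[ℂ] X)ˣ) : X →L[ℂ] X) ((B⁻¹ : (X →L[ℂ] X)ˣ) : X →L[ℂ] X) m = 0 := by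
  rw [elemdelta_eq_pow_apply_one, pow_mulLeft_inv_sub_mulRight_inv, Module.End.mul_apply,
    ← elemdelta_eq_pow_apply_one, h, map_zero]
end

section
/- Let δ_{A,B}^m(I) = 0, let N₁ be an n₁-nilpotent commuting with B and N₂ an n₂-nilpotent commuting with A. Then δ_{A+N₂, B+N₁}^{m+n₁+n₂-2}(I) = 0. -/
/-!
On the algebra of operators, `δ_{A,B} = L_A - R_B : T ↦ A T - T B` and `δ^r_{A,B}(I)` is its `r`-th
power evaluated at `I`. Since `δ_{A+N₂,B+N₁} = δ_{A,B} + δ_{N₂,N₁}` with commuting summands, and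
`δ_{N₂,N₁} = L_{N₂} - R_{N₁}` is nilpotent of index at most `n₁ + n₂ - 1`, every term of the
binomial expansion of `δ_{A+N₂,B+N₁}^{m+n₁+n₂-2}(I)` contains either `δ_{A,B}^j(I)` with `j ≥ m`
or a vanishing power of `δ_{N₂,N₁}`.
-/

open Finset

variable {X : Type*} [NormedAddCommGroup X] [NormedSpace ℂ X]

theorem Module.End.add_pow_apply_eq_zero_of_pow_apply_eq_zero {R M : Type*} [Semiring R]
    [AddCommMonoid M] [Module R M] {D S : Module.End R M} (hDS : Commute D S) {v : M}
    {m s k : ℕ} (hD : (D ^ m) v = 0) (hS : S ^ s = 0) (h : m + s ≤ k + 1) :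
    ((D + S) ^ k) v = 0 := by
  rw [hDS.add_pow', LinearMap.sum_apply]
  refine sum_eq_zero fun ⟨i, j⟩ hij => ?_
  rw [HasAntidiagonal.mem_antidiagonal] at hij
  rw [LinearMap.smul_apply]
  by_cases hi : m ≤ i
  · rw [(hDS.pow_pow i j).eq, Module.End.mul_apply, pow_map_zero_of_le hi hD, map_zero,
      smul_zero]
  · rw [pow_eq_zero_of_le (by omega) hS, mul_zero, LinearMap.zero_apply, smul_zero]

namespace LinearMap

variable (R : Type*) {A : Type*} [CommRing R] [Ring A] [Algebra R A]

def genDerivation (a b : A) : Module.End R A := mulLeft R a - mulRight R b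

variable {R}

theorem genDerivation_add (a b a' b' : A) :
    genDerivation R (a + a') (b + b') = genDerivation R a b + genDerivation R a' b' := by
  ext x
  simp only [genDerivation, add_apply, sub_apply, mulLeft_apply, mulRight_apply, add_mul, mul_add]
  abel

theorem commute_genDerivation {a b a' b' : A} (ha : Commute a a') (hb : Commute b b') :
    Commute (genDerivation R a b) (genDerivation R a' b') := by
  have hL : Commute (mulLeft R a) (mulLeft R a') :=
    LinearMap.ext fun x => by simp only [Module.End.mul_apply, mulLeft_apply, ← mul_assoc, ha.eq]
  have hR : Commute (mulRight R b) (mulRight R b') :=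
    LinearMap.ext fun x => by simp only [Module.End.mul_apply, mulRight_apply, mul_assoc, hb.eq]
  exact (hL.sub_right (commute_mulLeft_right a b')).sub_left
    ((commute_mulLeft_right a' b).symm.sub_right hR)

theorem genDerivation_pow_eq_zero {a b : A} {m n k : ℕ} (ha : a ^ m = 0) (hb : b ^ n = 0)
    (h : m + n ≤ k + 1) : genDerivation R a b ^ k = 0 := by
  have hL : mulLeft R a ^ m = 0 := by rw [pow_mulLeft, ha, mulLeft_zero_eq_zero]
  have hR : (-mulRight R b) ^ n = 0 := by
    rw [neg_pow (R := Module.End R A), pow_mulRight, hb, mulRight_zero_eq_zero, mul_zero]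
  rw [genDerivation, sub_eq_add_neg]
  exact (commute_mulLeft_right (R := R) a b).neg_right
    |>.add_pow_eq_zero_of_add_le_succ_of_pow_eq_zero hL hR h

theorem genDerivation_pow_apply_one (a b : A) (r : ℕ) :
    (genDerivation R a b ^ r) 1 =
      ∑ j ∈ Finset.range (r + 1), ((-1 : R) ^ j * (r.choose j : R)) • (a ^ (r - j) * b ^ j) := by
  rw [genDerivation, sub_eq_add_neg, add_comm,
    (commute_mulLeft_right (R := R) a b).symm.neg_left.add_pow, sum_apply]
  refine sum_congr rfl fun j _ => ?_
  rw [neg_pow (R := Module.End R A), pow_mulRight, pow_mulLeft,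
    ← neg_one_smul R (1 : Module.End R A), smul_pow, one_pow]
  simp only [Module.End.mul_apply, Module.End.natCast_apply, LinearMap.smul_apply,
    Module.End.one_apply, mulLeft_apply, mulRight_apply, ← Nat.cast_smul_eq_nsmul R,
    mul_smul_comm, smul_mul_assoc, mul_one, smul_smul]

end LinearMap

open LinearMap

theorem elemdelta_eq_genDerivation_pow_apply_one (A B : X →L[ℂ] X) (r : ℕ) :
    elemdelta A B r = (genDerivation ℂ A B ^ r) 1 :=
  (genDerivation_pow_apply_one (R := ℂ) A B r).symm

theorem stmt15 (A B N₁ N₂ : X →L[ℂ] X) (m n₁ n₂ : ℕ)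
    (h : elemdelta A B m = 0) (hN1 : N₁ ^ n₁ = 0) (hN2 : N₂ ^ n₂ = 0)
    (hc1 : B * N₁ = N₁ * B) (hc2 : A * N₂ = N₂ * A) :
    elemdelta (A + N₂) (B + N₁) (m + n₁ + n₂ - 2) = 0 := by
  nontriviality X →L[ℂ] X
  have hn₁ : n₁ ≠ 0 := by rintro rfl; simp at hN1
  have hn₂ : n₂ ≠ 0 := by rintro rfl; simp at hN2
  have hS : genDerivation ℂ N₂ N₁ ^ (n₂ + n₁ - 1) = 0 :=
    genDerivation_pow_eq_zero hN2 hN1 (by omega)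
  rw [elemdelta_eq_genDerivation_pow_apply_one] at h ⊢
  rw [genDerivation_add]
  exact Module.End.add_pow_apply_eq_zero_of_pow_apply_eq_zero (commute_genDerivation hc2 hc1) h hS
    (by omega)
end
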